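/- arXiv:2511.09753 — 3 statements merged into one kernel-verified Lean document; each statement's English description precedes it below -/
import Mathlib

section
/- Let A ∈ ℝ^{n×n} be symmetric positive-definite, M_0 ∈ ℝ^{n×n}, R_0 := I_n − A M_0, G_0 := −A R_0, and i ≥ 1. Then a matrix M* ∈ M_0 + K_i(A², G_0) satisfies the Galerkin condition (I_n − AM*, V)_F = 0 for all V ∈ K_i(A², G_0) if and only if M* minimizes the A-weighted Frobenius norm of the error over the affine Krylov subspace: ‖A⁻¹ − M*‖_{F,A} = min { ‖A⁻¹ − M‖_{F,A} : M ∈ M_0 + K_i(A², G_0) }. -/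
open Matrix

/-- Frobenius inner product `(X,Y)_F = trace (Xᵀ Y)`. -/
noncomputable def finner {n : ℕ} (X Y : Matrix (Fin n) (Fin n) ℝ) : ℝ :=
  (Xᵀ * Y).trace

/-- Frobenius norm `‖X‖_F`. -/
noncomputable def fnorm {n : ℕ} (X : Matrix (Fin n) (Fin n) ℝ) : ℝ :=
  Real.sqrt (finner X X)

/-- A-weighted Frobenius inner product `(X,Y)_{F,A} = trace (Xᵀ A Y)`. -/
noncomputable def finnerA {n : ℕ} (A X Y : Matrix (Fin n) (Fin n) ℝ) : ℝ :=
  (Xᵀ * A * Y).trace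

/-- A-weighted Frobenius norm `‖X‖_{F,A}`. -/
noncomputable def fnormA {n : ℕ} (A X : Matrix (Fin n) (Fin n) ℝ) : ℝ :=
  Real.sqrt (finnerA A X X)

/-- Krylov subspace `K_i(B, X) = span {X, BX, …, B^(i-1) X}`. -/
noncomputable def krylov {n : ℕ} (i : ℕ) (B X : Matrix (Fin n) (Fin n) ℝ) :
    Submodule ℝ (Matrix (Fin n) (Fin n) ℝ) :=
  Submodule.span ℝ {Y | ∃ j < i, Y = B ^ j * X}

/-!
Since `A` is symmetric and `A * A⁻¹ = 1`, the residual pairing `(1 - A M, V)_F` equals the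
`A`-weighted pairing `(A⁻¹ - M, V)_{F,A}`. The Galerkin condition thus says that the error
`A⁻¹ - M*` is `(·,·)_{F,A}`-orthogonal to the Krylov space, and the theorem becomes the
characterisation of best approximation from a subspace by orthogonality, valid for any symmetric
positive semidefinite bilinear form.
-/

lemma LinearMap.BilinForm.IsSymm.apply_add_add {R M : Type*} [CommRing R] [AddCommGroup M]
    [Module R M] {B : LinearMap.BilinForm R M} (hB : B.IsSymm) (x y : M) :
    B (x + y) (x + y) = B x x + 2 * B x y + B y y := by
  rw [map_add₂, map_add, map_add, hB.eq y x]
  ring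

theorem LinearMap.BilinForm.IsPosSemidef.forall_apply_eq_zero_iff_forall_le {K M : Type*}
    [Field K] [LinearOrder K] [IsStrictOrderedRing K] [AddCommGroup M] [Module K M]
    {B : LinearMap.BilinForm K M} (hB : B.IsPosSemidef) (S : Submodule K M) (e : M) :
    (∀ v ∈ S, B e v = 0) ↔ ∀ v ∈ S, B e e ≤ B (e + v) (e + v) := by
  simp_rw [hB.isSymm.apply_add_add]
  refine ⟨fun h v hv => ?_, fun h v hv => ?_⟩
  · linarith [h v hv, hB.isNonneg.nonneg v]
  · -- `t ↦ B (e + t • v) (e + t • v)` is minimal at `t = 0`, so its discriminant is `≤ 0`.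
    have hquad : ∀ t : K, 0 ≤ B v v * (t * t) + 2 * B e v * t + 0 := fun t => by
      have hle := h (t • v) (S.smul_mem t hv)
      simp only [map_smul, LinearMap.smul_apply, smul_eq_mul] at hle
      linarith
    have hdisc := discrim_le_zero hquad
    rw [discrim] at hdisc
    nlinarith [sq_nonneg (B e v)]

section Frobenius

variable {n : ℕ}

noncomputable def finnerAForm (A : Matrix (Fin n) (Fin n) ℝ) :
    LinearMap.BilinForm ℝ (Matrix (Fin n) (Fin n) ℝ) :=
  LinearMap.mk₂ ℝ (finnerA A)
    (fun X Y Z => by simp [finnerA, transpose_add, add_mul])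
    (fun c X Y => by simp [finnerA, transpose_smul])
    (fun X Y Z => by simp [finnerA, mul_add])
    (fun c X Y => by simp [finnerA])

@[simp]
lemma finnerAForm_apply (A X Y : Matrix (Fin n) (Fin n) ℝ) :
    finnerAForm A X Y = finnerA A X Y := rfl

lemma finnerA_self_nonneg {A : Matrix (Fin n) (Fin n) ℝ} (hA : A.PosSemidef)
    (X : Matrix (Fin n) (Fin n) ℝ) : 0 ≤ finnerA A X X := by
  simpa [finnerA, conjTranspose_eq_transpose_of_trivial] using
    (hA.conjTranspose_mul_mul_same X).trace_nonneg

lemma finnerA_comm {A : Matrix (Fin n) (Fin n) ℝ} (hA : A.IsSymm)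
    (X Y : Matrix (Fin n) (Fin n) ℝ) : finnerA A X Y = finnerA A Y X := by
  rw [finnerA, ← trace_transpose, transpose_mul, transpose_mul, transpose_transpose, hA.eq,
    ← Matrix.mul_assoc, finnerA]

lemma Matrix.PosSemidef.isPosSemidef_finnerAForm {A : Matrix (Fin n) (Fin n) ℝ}
    (hA : A.PosSemidef) : (finnerAForm A).IsPosSemidef where
  eq := finnerA_comm (isHermitian_iff_isSymm.mp hA.isHermitian)
  nonneg := finnerA_self_nonneg hA

lemma finner_mul_left {A : Matrix (Fin n) (Fin n) ℝ} (hA : A.IsSymm)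
    (X Y : Matrix (Fin n) (Fin n) ℝ) : finner (A * X) Y = finnerA A X Y := by
  rw [finner, finnerA, transpose_mul, hA.eq, Matrix.mul_assoc]

lemma fnormA_le_fnormA_iff {A : Matrix (Fin n) (Fin n) ℝ} (hA : A.PosSemidef)
    (X Y : Matrix (Fin n) (Fin n) ℝ) :
    fnormA A X ≤ fnormA A Y ↔ finnerA A X X ≤ finnerA A Y Y :=
  Real.sqrt_le_sqrt_iff (finnerA_self_nonneg hA Y)

lemma finner_one_sub_mul {A : Matrix (Fin n) (Fin n) ℝ} (hA : A.PosDef)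
    (M V : Matrix (Fin n) (Fin n) ℝ) : finner (1 - A * M) V = finnerA A (A⁻¹ - M) V := by
  rw [← finner_mul_left (isHermitian_iff_isSymm.mp hA.isHermitian), Matrix.mul_sub,
    mul_nonsing_inv A ((isUnit_iff_isUnit_det A).mp hA.isUnit)]

end Frobenius

theorem ncg_galerkin_iff_optimal_general {n : ℕ}
    (A M₀ Mstar : Matrix (Fin n) (Fin n) ℝ) (hA : A.PosDef)
    (G₀ : Matrix (Fin n) (Fin n) ℝ)
    (i : ℕ)
    (hMstar : ∃ V ∈ krylov i (A ^ 2) G₀, Mstar = M₀ + V) :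
    (∀ V ∈ krylov i (A ^ 2) G₀, finner (1 - A * Mstar) V = 0) ↔
      (∀ M : Matrix (Fin n) (Fin n) ℝ, (∃ V ∈ krylov i (A ^ 2) G₀, M = M₀ + V) →
        fnormA A (A⁻¹ - Mstar) ≤ fnormA A (A⁻¹ - M)) := by
  obtain ⟨Vstar, hVstar, rfl⟩ := hMstar
  set S := krylov i (A ^ 2) G₀
  set E := A⁻¹ - (M₀ + Vstar)
  have hcoset : ∀ W, A⁻¹ - (M₀ + W) = E + (Vstar - W) := fun W => by simp only [E]; abel
  simp_rw [finner_one_sub_mul hA, fnormA_le_fnormA_iff hA.posSemidef]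
  have key := hA.posSemidef.isPosSemidef_finnerAForm.forall_apply_eq_zero_iff_forall_le S E
  simp only [finnerAForm_apply] at key
  rw [key]
  constructor
  · rintro h M ⟨W, hW, rfl⟩
    rw [hcoset]
    exact h _ (S.sub_mem hVstar hW)
  · intro h v hv
    simpa [hcoset] using h (M₀ + (Vstar - v)) ⟨_, S.sub_mem hVstar hv, rfl⟩

/-- Optimality of NCG iterates: a matrix in the affine Krylov subspace of A²
satisfies the Galerkin condition iff it minimizes the A-weighted Frobenius norm
of the error over that affine subspace. -/
theorem ncg_galerkin_iff_optimal {n : ℕ}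
    (A M₀ Mstar : Matrix (Fin n) (Fin n) ℝ) (hA : A.PosDef)
    (R₀ G₀ : Matrix (Fin n) (Fin n) ℝ)
    (hR₀ : R₀ = 1 - A * M₀) (hG₀ : G₀ = -(A * R₀))
    (i : ℕ) (hi : 1 ≤ i)
    (hMstar : ∃ V ∈ krylov i (A ^ 2) G₀, Mstar = M₀ + V) :
    (∀ V ∈ krylov i (A ^ 2) G₀, finner (1 - A * Mstar) V = 0) ↔
      (∀ M : Matrix (Fin n) (Fin n) ℝ, (∃ V ∈ krylov i (A ^ 2) G₀, M = M₀ + V) →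
        fnormA A (A⁻¹ - Mstar) ≤ fnormA A (A⁻¹ - M)) :=
  ncg_galerkin_iff_optimal_general A M₀ Mstar hA G₀ i hMstar
end

section
/- Let A ∈ ℝ^{n×n} be symmetric positive-definite having exactly k distinct eigenvalues, M_0 ∈ ℝ^{n×n}, R_0 := I_n − A M_0, and G_0 := −A R_0. Then A⁻¹ ∈ M_0 + K_k(A², G_0); that is, the minimum of ‖A⁻¹ − M‖_{F,A} over M ∈ M_0 + K_k(A², G_0) is zero, so the NCG method converges to A⁻¹ in at most k iterations. -/
open Matrix

/-- Conjugation by a unitary matrix as an algebra homomorphism. -/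
noncomputable def conjAH {n : ℕ} (U : Matrix (Fin n) (Fin n) ℝ)
    (h1 : U * star U = 1) (h2 : star U * U = 1) :
    Matrix (Fin n) (Fin n) ℝ →ₐ[ℝ] Matrix (Fin n) (Fin n) ℝ where
  toFun M := U * M * star U
  map_one' := show U * 1 * star U = 1 by rw [mul_one, h1]
  map_mul' M N := by
    simp only [mul_assoc]
    rw [← mul_assoc (star U) U, h2, one_mul]
  map_zero' := by simp
  map_add' M N := by noncomm_ring
  commutes' r := by
    simp only [Algebra.algebraMap_eq_smul_one, mul_smul_comm, smul_mul_assoc, mul_one, h1]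

lemma aeval_diagonal' {n : ℕ} (d : Fin n → ℝ) (p : Polynomial ℝ) :
    Polynomial.aeval (Matrix.diagonal d) p = Matrix.diagonal (fun i => p.eval (d i)) := by
  have h := Polynomial.aeval_algHom_apply
    (Matrix.diagonalAlgHom (R := ℝ) (n := Fin n) (α := ℝ)) d p
  simp only [Matrix.diagonalAlgHom_apply] at h
  rw [h]
  have hfun : (Polynomial.aeval d p : Fin n → ℝ) = fun i => p.eval (d i) := by
    funext i
    have h2 := (Polynomial.aeval_algHom_apply (Pi.evalAlgHom ℝ (fun _ : Fin n => ℝ) i) d p).symm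
    simp only [Pi.evalAlgHom_apply] at h2
    rw [h2]
    exact congrFun (Polynomial.coe_aeval_eq_eval (d i)) p
  rw [hfun]

/-- A Hermitian real matrix is annihilated by the product of (X - μ) over its
distinct eigenvalues. -/
lemma annihilate {n : ℕ} (A : Matrix (Fin n) (Fin n) ℝ) (hH : A.IsHermitian) :
    Polynomial.aeval A
      (∏ μ ∈ Finset.univ.image hH.eigenvalues, (Polynomial.X - Polynomial.C μ)) = 0 := by
  set U : Matrix (Fin n) (Fin n) ℝ := (hH.eigenvectorUnitary : Matrix (Fin n) (Fin n) ℝ) with hU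
  have h1 : U * star U = 1 := Matrix.mem_unitaryGroup_iff.mp hH.eigenvectorUnitary.2
  have h2 : star U * U = 1 := Matrix.mem_unitaryGroup_iff'.mp hH.eigenvectorUnitary.2
  have hspec : A = conjAH U h1 h2 (Matrix.diagonal hH.eigenvalues) := by
    have := hH.spectral_theorem
    simpa [conjAH, Function.comp] using this
  have key : Polynomial.aeval (conjAH U h1 h2 (Matrix.diagonal hH.eigenvalues))
      (∏ μ ∈ Finset.univ.image hH.eigenvalues, (Polynomial.X - Polynomial.C μ)) = 0 := by
    rw [Polynomial.aeval_algHom_apply, aeval_diagonal']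
    have : (fun i => Polynomial.eval (hH.eigenvalues i)
        (∏ μ ∈ Finset.univ.image hH.eigenvalues, (Polynomial.X - Polynomial.C μ))) = 0 := by
      funext i
      simp only [Polynomial.eval_prod, Polynomial.eval_sub, Polynomial.eval_X, Polynomial.eval_C]
      exact Finset.prod_eq_zero (Finset.mem_image_of_mem _ (Finset.mem_univ i)) (by ring)
    rw [this]
    have : Matrix.diagonal (0 : Fin n → ℝ) = 0 := Matrix.diagonal_zero
    rw [this, map_zero]
  rw [← hspec] at key
  exact key

lemma aeval_mul_mem_krylov {n k : ℕ} (B G : Matrix (Fin n) (Fin n) ℝ)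
    (p : Polynomial ℝ) (hp : p.natDegree < k) :
    (Polynomial.aeval B p) * G ∈ krylov k B G := by
  rw [Polynomial.aeval_eq_sum_range' hp, Finset.sum_mul]
  refine Submodule.sum_mem _ fun i hi => ?_
  rw [smul_mul_assoc]
  exact Submodule.smul_mem _ _
    (Submodule.subset_span ⟨i, Finset.mem_range.mp hi, rfl⟩)

/-- Finite termination of NCG: if A has exactly k distinct eigenvalues, then
A⁻¹ lies in the affine Krylov subspace M₀ + K_k(A², G₀), so NCG converges in at
most k iterations. -/
theorem ncg_finite_termination {n : ℕ}
    (A M₀ : Matrix (Fin n) (Fin n) ℝ) (hA : A.PosDef)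
    (R₀ G₀ : Matrix (Fin n) (Fin n) ℝ)
    (hR₀ : R₀ = 1 - A * M₀) (hG₀ : G₀ = -(A * R₀))
    (k : ℕ) (hk : (Finset.univ.image hA.1.eigenvalues).card = k) :
    ∃ V ∈ krylov k (A ^ 2) G₀, A⁻¹ = M₀ + V := by
  rcases Nat.eq_zero_or_pos n with hn | hn
  · subst hn
    exact ⟨0, Submodule.zero_mem _, Subsingleton.elim _ _⟩
  set S := Finset.univ.image hA.1.eigenvalues with hS
  have hkpos : 0 < k := by
    rw [← hk]
    exact Finset.card_pos.mpr ((Finset.univ_nonempty_iff.mpr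
      (Fin.pos_iff_nonempty.mp hn)).image _)
  -- the annihilating polynomial for A^2
  set Q : Polynomial ℝ := ∏ μ ∈ S, (Polynomial.X - Polynomial.C (μ ^ 2)) with hQdef
  have hQ0 : Polynomial.aeval (A ^ 2) Q = 0 := by
    have hcomp : Q.comp (Polynomial.X ^ 2) =
        (∏ μ ∈ S, (Polynomial.X - Polynomial.C μ)) *
        (∏ μ ∈ S, (Polynomial.X + Polynomial.C μ)) := by
      rw [hQdef, Polynomial.prod_comp, ← Finset.prod_mul_distrib]
      refine Finset.prod_congr rfl fun μ _ => ?_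
      simp only [Polynomial.sub_comp, Polynomial.X_comp, Polynomial.C_comp, map_pow,
        Polynomial.pow_comp]
      ring
    have hx : Polynomial.aeval A (Polynomial.X ^ 2 : Polynomial ℝ) = A ^ 2 := by simp
    have := Polynomial.aeval_comp (R := ℝ) (x := A) (p := Q) (q := Polynomial.X ^ 2)
    rw [hcomp, hx] at this
    rw [← this, _root_.map_mul, annihilate A hA.1, zero_mul]
  have hQmonic : Q.Monic := Polynomial.monic_prod_of_monic _ _
    (fun μ _ => Polynomial.monic_X_sub_C _)
  have hQdeg : Q.natDegree = k := by
    rw [hQdef, Polynomial.natDegree_prod _ _ (fun μ _ => Polynomial.X_sub_C_ne_zero _)]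
    simp only [Polynomial.natDegree_X_sub_C]
    rw [Finset.sum_const, smul_eq_mul, mul_one, hk]
  set c : ℝ := Q.coeff 0 with hc
  have hcne : c ≠ 0 := by
    rw [hc, Polynomial.coeff_zero_eq_eval_zero, hQdef, Polynomial.eval_prod]
    refine Finset.prod_ne_zero_iff.mpr fun μ hμ => ?_
    obtain ⟨i, _, rfl⟩ := Finset.mem_image.mp hμ
    have := hA.eigenvalues_pos i
    simp only [Polynomial.eval_sub, Polynomial.eval_X, Polynomial.eval_C, zero_sub, neg_ne_zero]
    positivity
  have hAdet : A.det ≠ 0 := ne_of_gt hA.det_pos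
  have h2det : (A ^ 2).det ≠ 0 := by
    rw [Matrix.det_pow]; exact pow_ne_zero _ hAdet
  set W : Matrix (Fin n) (Fin n) ℝ := Polynomial.aeval (A ^ 2) Q.divX with hW
  have h1 : W * A ^ 2 + c • (1 : Matrix (Fin n) (Fin n) ℝ) = 0 := by
    have := congrArg (Polynomial.aeval (A ^ 2)) (Polynomial.divX_mul_X_add Q)
    rw [map_add, _root_.map_mul, Polynomial.aeval_X, Polynomial.aeval_C, hQ0,
      Algebra.algebraMap_eq_smul_one] at this
    exact this
  have hWinv : W = -(c • (A ^ 2)⁻¹) := by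
    have h1' : W * A ^ 2 = -(c • (1 : Matrix (Fin n) (Fin n) ℝ)) := by
      rw [← eq_neg_iff_add_eq_zero] at h1; exact h1
    have := congrArg (fun M => M * (A ^ 2)⁻¹) h1'
    simpa [mul_assoc, Matrix.mul_nonsing_inv _ (Ne.isUnit h2det), smul_mul_assoc] using this
  have hE : A ^ 2 * (A⁻¹ - M₀) = -G₀ := by
    have hAinv : A * A⁻¹ = 1 := Matrix.mul_nonsing_inv A (Ne.isUnit hAdet)
    rw [hG₀, hR₀, pow_two, mul_sub, mul_assoc A A A⁻¹, hAinv, mul_one]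
    noncomm_ring
  have hEinv : A⁻¹ - M₀ = (A ^ 2)⁻¹ * (-G₀) := by
    have := congrArg (fun M => (A ^ 2)⁻¹ * M) hE
    simpa [← mul_assoc, Matrix.nonsing_inv_mul _ (Ne.isUnit h2det)] using this
  refine ⟨c⁻¹ • (W * G₀), ?_, ?_⟩
  · refine Submodule.smul_mem _ _ (aeval_mul_mem_krylov _ _ _ ?_)
    rw [Polynomial.natDegree_divX_eq_natDegree_tsub_one, hQdeg]
    omega
  · have : c⁻¹ • (W * G₀) = A⁻¹ - M₀ := by
      rw [hWinv, hEinv]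
      rw [neg_mul, smul_mul_assoc, smul_neg, smul_smul, inv_mul_cancel₀ hcne, one_smul]
      simp [Matrix.mul_neg]
    rw [this]; abel
end

section
/- Let A ∈ ℝ^{n×n} be symmetric positive-definite, M ∈ ℝ^{n×n} with residual R := I_n − AM, and P ∈ ℝ^{n×n}. Suppose c := ‖AR‖_F² · ‖AP‖_F² − (AR, AP)_F² ≠ 0, and define δ := [‖AP‖_F² · (R, AR)_F − (AR, AP)_F · (R, AP)_F] / c and γ := [‖AR‖_F² · (R, AP)_F − (AR, AP)_F · (R, AR)_F] / c. Then the matrix M' := M + δR + γP minimizes ‖I_n − AM''‖_F over all M'' ∈ M + span{R, P}; that is, for all s, t ∈ ℝ, ‖I_n − A(M + δR + γP)‖_F ≤ ‖I_n − A(M + sR + tP)‖_F. -/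
open Matrix

lemma finner_nonneg {n : ℕ} (X : Matrix (Fin n) (Fin n) ℝ) : 0 ≤ finner X X := by
  unfold finner
  rw [Matrix.trace]
  apply Finset.sum_nonneg
  intro i _
  rw [Matrix.diag_apply, Matrix.mul_apply]
  apply Finset.sum_nonneg
  intro j _
  rw [Matrix.transpose_apply]
  exact mul_self_nonneg _

lemma finner_comm {n : ℕ} (X Y : Matrix (Fin n) (Fin n) ℝ) : finner X Y = finner Y X := by
  unfold finner
  rw [← Matrix.trace_transpose, Matrix.transpose_mul, Matrix.transpose_transpose]

lemma finner_sub_left {n : ℕ} (X Y Z : Matrix (Fin n) (Fin n) ℝ) :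
    finner (X - Y) Z = finner X Z - finner Y Z := by
  unfold finner; rw [Matrix.transpose_sub, Matrix.sub_mul, Matrix.trace_sub]

lemma finner_sub_right {n : ℕ} (X Y Z : Matrix (Fin n) (Fin n) ℝ) :
    finner X (Y - Z) = finner X Y - finner X Z := by
  unfold finner; rw [Matrix.mul_sub, Matrix.trace_sub]

lemma finner_add_left {n : ℕ} (X Y Z : Matrix (Fin n) (Fin n) ℝ) :
    finner (X + Y) Z = finner X Z + finner Y Z := by
  unfold finner; rw [Matrix.transpose_add, Matrix.add_mul, Matrix.trace_add]

lemma finner_add_right {n : ℕ} (X Y Z : Matrix (Fin n) (Fin n) ℝ) :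
    finner X (Y + Z) = finner X Y + finner X Z := by
  unfold finner; rw [Matrix.mul_add, Matrix.trace_add]

lemma finner_smul_left {n : ℕ} (a : ℝ) (X Y : Matrix (Fin n) (Fin n) ℝ) :
    finner (a • X) Y = a * finner X Y := by
  unfold finner; rw [Matrix.transpose_smul, Matrix.smul_mul, Matrix.trace_smul, smul_eq_mul]

lemma finner_smul_right {n : ℕ} (a : ℝ) (X Y : Matrix (Fin n) (Fin n) ℝ) :
    finner X (a • Y) = a * finner X Y := by
  unfold finner; rw [Matrix.mul_smul, Matrix.trace_smul, smul_eq_mul]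

/-- One step of the locally optimal minimal residual (LOMR) method: the iterate
M + δ R + γ P minimizes the residual Frobenius norm over the two-dimensional
affine space M + span{R, P}. -/
theorem lomr_step_optimal {n : ℕ}
    (A M P : Matrix (Fin n) (Fin n) ℝ) (hA : A.PosDef)
    (R : Matrix (Fin n) (Fin n) ℝ) (hR : R = 1 - A * M)
    (c δ γ : ℝ)
    (hc : c = finner (A * R) (A * R) * finner (A * P) (A * P) -
      finner (A * R) (A * P) ^ 2)
    (hc0 : c ≠ 0)
    (hδ : δ = (finner (A * P) (A * P) * finner R (A * R) -
      finner (A * R) (A * P) * finner R (A * P)) / c)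
    (hγ : γ = (finner (A * R) (A * R) * finner R (A * P) -
      finner (A * R) (A * P) * finner R (A * R)) / c) :
    ∀ s t : ℝ,
      fnorm (1 - A * (M + δ • R + γ • P)) ≤
        fnorm (1 - A * (M + s • R + t • P)) := by
  intro s t
  have hres : ∀ x y : ℝ, 1 - A * (M + x • R + y • P) = R - x • (A * R) - y • (A * P) := by
    intro x y
    rw [hR]
    simp only [Matrix.mul_add, Matrix.mul_smul, Matrix.mul_sub, Matrix.mul_one]
    abel
  set U := A * R with hU
  set V := A * P with hV
  set a := finner U U with ha
  set b := finner U V with hb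
  set d := finner V V with hd
  set p := finner R U with hp
  set q := finner R V with hq
  have expand : ∀ x y : ℝ, finner (R - x • U - y • V) (R - x • U - y • V) =
      finner R R - 2 * x * p - 2 * y * q + x ^ 2 * a + 2 * x * y * b + y ^ 2 * d := by
    intro x y
    simp only [finner_sub_left, finner_sub_right, finner_smul_left, finner_smul_right,
      finner_comm U R, finner_comm V R, finner_comm V U, ha, hb, hd, hp, hq]
    ring
  have e1 : a * δ + b * γ = p := by
    rw [hδ, hγ]
    field_simp
    rw [hc]
    ring
  have e2 : b * δ + d * γ = q := by
    rw [hδ, hγ]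
    field_simp
    rw [hc]
    ring
  have hDnn := finner_nonneg ((s - δ) • U + (t - γ) • V)
  have hDeq : finner ((s - δ) • U + (t - γ) • V) ((s - δ) • U + (t - γ) • V) =
      a * (s - δ) ^ 2 + 2 * b * (s - δ) * (t - γ) + d * (t - γ) ^ 2 := by
    simp only [finner_add_left, finner_add_right, finner_smul_left, finner_smul_right,
      finner_comm V U, ha, hb, hd]
    ring
  have hkey : (finner R R - 2 * s * p - 2 * t * q + s ^ 2 * a + 2 * s * t * b + t ^ 2 * d) -
      (finner R R - 2 * δ * p - 2 * γ * q + δ ^ 2 * a + 2 * δ * γ * b + γ ^ 2 * d) =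
      a * (s - δ) ^ 2 + 2 * b * (s - δ) * (t - γ) + d * (t - γ) ^ 2 := by
    linear_combination (2 * (s - δ)) * e1 + (2 * (t - γ)) * e2
  rw [hres, hres]
  unfold fnorm
  apply Real.sqrt_le_sqrt
  rw [expand, expand]
  rw [hDeq] at hDnn
  linarith
end
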